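/- arXiv:2005.04440 — 4 statements merged into one kernel-verified Lean document; each statement's English description precedes it below -/
import Mathlib

section
/- Let (X,d) be a metric space. Suppose that for every upper semicontinuous function u : X → ℝ bounded above, every ε > 0, every x₀ with u(x₀) > sup u − ε, and every δ > 0, there exists x̄ ∈ X with u(x̄) ≥ u(x₀), d(x₀, x̄) ≤ δ, and u(y) ≤ u(x̄) + (ε/δ)·d(x̄, y) for all y. Then (X,d) is a complete metric space. -/
open Filter Topology

/-- Weston–Sullivan converse of Ekeland's variational principle: if the Ekeland
principle holds for every bounded-above upper semicontinuous function on a metric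
space, then the space is complete. -/
theorem ekeland_implies_complete {X : Type*} [MetricSpace X]
    (h : ∀ u : X → ℝ, UpperSemicontinuous u → BddAbove (Set.range u) →
      ∀ ε > (0 : ℝ), ∀ x₀ : X, (⨆ x, u x) - ε < u x₀ → ∀ δ > (0 : ℝ),
        ∃ xbar : X, u x₀ ≤ u xbar ∧ dist x₀ xbar ≤ δ ∧
          ∀ y : X, u y ≤ u xbar + (ε / δ) * dist xbar y) :
    CompleteSpace X := by
  apply Metric.complete_of_cauchySeq_tendsto
  intro s hs
  -- the limit L x = lim_n dist x (s n) exists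
  have hL : ∀ x : X, ∃ a : ℝ, Tendsto (fun n => dist x (s n)) atTop (𝓝 a) := by
    intro x
    apply cauchySeq_tendsto_of_complete
    rw [Metric.cauchySeq_iff] at hs ⊢
    intro ε hε
    obtain ⟨N, hN⟩ := hs ε hε
    refine ⟨N, fun m hm n hn => ?_⟩
    have h1 : |dist x (s m) - dist x (s n)| ≤ dist (s m) (s n) := by
      rw [dist_comm x (s m), dist_comm x (s n)]
      exact abs_dist_sub_le _ _ _
    rw [Real.dist_eq]
    exact lt_of_le_of_lt h1 (hN m hm n hn)
  set L : X → ℝ := fun x => (hL x).choose with hLdef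
  have hLx : ∀ x, Tendsto (fun n => dist x (s n)) atTop (𝓝 (L x)) := fun x => (hL x).choose_spec
  have hLnn : ∀ x, 0 ≤ L x := fun x =>
    le_of_tendsto_of_tendsto' tendsto_const_nhds (hLx x) fun n => dist_nonneg
  have hlip : ∀ x y : X, L x ≤ L y + dist x y := by
    intro x y
    refine le_of_tendsto_of_tendsto' (hLx x) ((hLx y).add tendsto_const_nhds) fun n => ?_
    linarith [dist_triangle x y (s n)]
  have hLcont : Continuous L := by
    apply (LipschitzWith.of_dist_le_mul (K := 1) (f := L) ?_).continuous
    intro x y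
    rw [Real.dist_eq, NNReal.coe_one, one_mul, abs_sub_le_iff]
    refine ⟨by linarith [hlip x y], ?_⟩
    have h2 := hlip y x
    rw [dist_comm y x] at h2
    linarith
  set u : X → ℝ := fun x => -L x with hudef
  have hucont : Continuous u := hLcont.neg
  have husc : UpperSemicontinuous u := hucont.upperSemicontinuous
  have hbdd : BddAbove (Set.range u) := by
    refine ⟨0, ?_⟩
    rintro _ ⟨x, rfl⟩
    simp only [hudef]
    linarith [hLnn x]
  have hsup : (⨆ x, u x) ≤ 0 := by
    rcases isEmpty_or_nonempty X with hX | hX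
    · simp [ciSup_of_empty]
    · exact ciSup_le fun x => by simp only [hudef]; linarith [hLnn x]
  -- L (s n) → 0
  have hLs : Tendsto (fun n => L (s n)) atTop (𝓝 0) := by
    rw [Metric.tendsto_atTop]
    intro ε hε
    rw [Metric.cauchySeq_iff] at hs
    obtain ⟨N, hN⟩ := hs (ε / 2) (by linarith)
    refine ⟨N, fun n hn => ?_⟩
    have hle : L (s n) ≤ ε / 2 := by
      refine le_of_tendsto (hLx (s n)) ?_
      filter_upwards [eventually_ge_atTop N] with m hm
      exact le_of_lt (hN n hn m hm)
    rw [Real.dist_eq, sub_zero, abs_of_nonneg (hLnn _)]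
    linarith
  -- pick a point with L small
  obtain ⟨N₀, hN₀⟩ := (Metric.tendsto_atTop.mp hLs) (1 / 2) (by norm_num)
  have hLsN₀ : L (s N₀) < 1 := by
    have := hN₀ N₀ le_rfl
    rw [Real.dist_eq, sub_zero, abs_of_nonneg (hLnn _)] at this
    linarith
  obtain ⟨xb, _, _, h3⟩ := h u husc hbdd 1 one_pos (s N₀)
    (by simp only [hudef]; linarith) 2 two_pos
  -- pass to the limit in h3 with y = s n
  have key : (0 : ℝ) ≤ -L xb + (1 / 2) * L xb := by
    have hlhs : Tendsto (fun n => u (s n)) atTop (𝓝 0) := by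
      simpa using hLs.neg
    have hrhs : Tendsto (fun n => u xb + (1 / 2 : ℝ) * dist xb (s n)) atTop
        (𝓝 (-L xb + (1 / 2) * L xb)) := by
      exact tendsto_const_nhds.add ((hLx xb).const_mul _)
    refine le_of_tendsto_of_tendsto' hlhs hrhs fun n => ?_
    have := h3 (s n)
    norm_num at this ⊢
    linarith
  have hLxb : L xb = 0 := by
    have := hLnn xb
    linarith
  refine ⟨xb, ?_⟩
  rw [tendsto_iff_dist_tendsto_zero]
  have : Tendsto (fun n => dist xb (s n)) atTop (𝓝 0) := hLxb ▸ hLx xb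
  simpa [dist_comm] using this
end

section
/- Let M be a connected Riemannian manifold with distance d, and suppose that for some compact set K with nonempty interior, inf { Lip(u) : u compactly supported Lipschitz on M, u ≤ −1 on K } = 0. Then every closed bounded subset of M is compact (M is complete). -/
/-- Capacity criterion implies completeness (Riemannian/symmetric case of
implication 6) ⟹ 1) of the main theorem).  `M` plays the role of a connected
Riemannian manifold with its Riemannian distance: a connected, locally compact
metric space whose metric is a length (intrinsic) metric, expressed by the
existence of curves of length arbitrarily close to the distance.  If for some
compact set `K` with nonempty interior the infimum of the Lipschitz constants of
compactly supported Lipschitz functions that are `≤ -1` on `K` vanishes, then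
every closed bounded subset of `M` is compact (i.e. `M` is proper, hence
complete). -/
theorem capacity_zero_implies_proper {M : Type*} [MetricSpace M]
    [ConnectedSpace M] [LocallyCompactSpace M]
    (hlength : ∀ x y : M, ∀ δ > (0 : ℝ), ∃ γ : ℝ → M, γ 0 = x ∧ γ 1 = y ∧
      ∃ L : NNReal, (L : ℝ) ≤ dist x y + δ ∧ LipschitzOnWith L γ (Set.Icc 0 1))
    (K : Set M) (hK : IsCompact K) (hKint : (interior K).Nonempty)
    (hcap : ∀ ε > (0 : ℝ), ∃ u : M → ℝ, HasCompactSupport u ∧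
      (∃ L : NNReal, (L : ℝ) < ε ∧ LipschitzWith L u) ∧ ∀ x ∈ K, u x ≤ -1) :
    ∀ S : Set M, IsClosed S → Bornology.IsBounded S → IsCompact S := by
  intro S hS hb
  obtain ⟨x₀, hx₀⟩ := hKint
  have hx₀K : x₀ ∈ K := interior_subset hx₀
  obtain ⟨r, hr⟩ := hb.subset_closedBall x₀
  set R : ℝ := max r 0 with hR
  have hR0 : 0 ≤ R := le_max_right _ _
  have hε : (0 : ℝ) < 1 / (R + 1) := by positivity
  obtain ⟨u, hu, ⟨L, hL, hLip⟩, hle⟩ := hcap _ hε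
  have hball : Metric.closedBall x₀ R ⊆ tsupport u := by
    intro y hy
    by_contra h
    have hy0 : u y = 0 := image_eq_zero_of_notMem_tsupport h
    have hdist : dist y x₀ ≤ R := Metric.mem_closedBall.mp hy
    have h1 : dist (u y) (u x₀) ≤ L * dist y x₀ := hLip.dist_le_mul y x₀
    have h2 : (L : ℝ) * dist y x₀ ≤ (L : ℝ) * R :=
      mul_le_mul_of_nonneg_left hdist L.coe_nonneg
    have h3 : (L : ℝ) * R < 1 := by
      have : (L : ℝ) * R ≤ (1 / (R + 1)) * R := by
        apply mul_le_mul_of_nonneg_right hL.le hR0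
      calc (L : ℝ) * R ≤ (1 / (R + 1)) * R := this
        _ < 1 := by rw [div_mul_eq_mul_div, one_mul, div_lt_one (by positivity)]; linarith
    have h4 : (1 : ℝ) ≤ dist (u y) (u x₀) := by
      rw [Real.dist_eq, hy0]
      have := hle x₀ hx₀K
      rw [abs_sub_comm, abs_of_nonpos (by linarith)]
      linarith
    linarith
  have hcomp : IsCompact (Metric.closedBall x₀ R) :=
    hu.of_isClosed_subset Metric.isClosed_closedBall hball
  exact hcomp.of_isClosed_subset hS
    (hr.trans (Metric.closedBall_subset_closedBall (le_max_left _ _)))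
end

section
/- Fix θ ∈ (0,1), λ > 0, and set τ = (λ(1−θ)²/(2(1+θ)))^{1/(1−θ)}. Then the function u : ℝᵐ → ℝ given by u(x) = τ·|x|^{2/(1−θ)} is C², and at every x ≠ 0 it satisfies Δ∞ᴺ u(x) = λ·u(x)^θ, where Δ∞ᴺ u = ⟨D²u · ∇u/|∇u|, ∇u/|∇u|⟩. -/
/-!
Along the ray through `x ≠ 0` the function `u = τ ‖·‖ ^ p`, `p = 2 / (1 - θ)`, is the profile
`η t = τ t ^ p` shifted by `‖x‖`, and since `η' > 0` its normalized gradient is `x / ‖x‖`; hence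
`Δ∞ᴺ u x = η'' ‖x‖ = τ p (p - 1) ‖x‖ ^ (p - 2)`, which is `λ (u x) ^ θ` exactly for the given `τ`.

For the regularity, `p > 2` and the derivative of `‖·‖ ^ p` is `p ⟪‖y‖ ^ (p - 2) • y, ·⟫`;
the field `y ↦ ‖y‖ ^ q • y` (`q > 0`) is `C¹`, its derivative being `O(‖y‖ ^ q)`, hence zero at the
origin.
-/

open Real Filter Topology Asymptotics

/-- The normalized infinity Laplacian of a function on Euclidean space:
the second derivative in the direction of the normalized gradient. -/
noncomputable def normInfLaplacian {m : ℕ}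
    (v : EuclideanSpace ℝ (Fin m) → ℝ) (x : EuclideanSpace ℝ (Fin m)) : ℝ :=
  iteratedFDeriv ℝ 2 v x
    ![‖gradient v x‖⁻¹ • gradient v x, ‖gradient v x‖⁻¹ • gradient v x]

section

variable {E : Type*} [NormedAddCommGroup E] [InnerProductSpace ℝ E]

theorem hasFDerivAt_norm_rpow_of_ne_zero {x : E} (hx : x ≠ 0) (q : ℝ) :
    HasFDerivAt (fun x : E => ‖x‖ ^ q) ((q * ‖x‖ ^ (q - 2)) • innerSL ℝ x) x := by
  convert ((hasStrictFDerivAt_norm_sq x).rpow_const (p := q / 2) (by simp [hx])).hasFDerivAt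
    using 1
  · ext y
    simp_rw [← Real.rpow_natCast_mul (norm_nonneg _)]
    push_cast
    ring_nf
  · simp_rw [← Real.rpow_natCast_mul (norm_nonneg _), ← Nat.cast_smul_eq_nsmul ℝ, smul_smul]
    ring_nf

noncomputable def fderivNormRpowSmul (q : ℝ) (y : E) : E →L[ℝ] E :=
  ‖y‖ ^ q • ContinuousLinearMap.id ℝ E + ((q * ‖y‖ ^ (q - 2)) • innerSL ℝ y).smulRight y

theorem fderivNormRpowSmul_zero {q : ℝ} (hq : 0 < q) : fderivNormRpowSmul q (0 : E) = 0 := by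
  simp [fderivNormRpowSmul, hq.ne']

theorem hasFDerivAt_norm_rpow_smul {q : ℝ} (hq : 0 < q) (y : E) :
    HasFDerivAt (fun y : E => ‖y‖ ^ q • y) (fderivNormRpowSmul q y) y := by
  rcases eq_or_ne y 0 with rfl | hy
  · rw [fderivNormRpowSmul_zero hq]
    refine .of_isLittleO ?_
    have hsmall : (fun h : E => ‖h‖ ^ q) =o[𝓝 0] fun _ => (1 : ℝ) := by
      refine (isLittleO_const_iff one_ne_zero).mpr ?_
      convert (continuous_norm.rpow_const fun _ => Or.inr hq.le).tendsto (0 : E) using 2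
      simp [hq.ne']
    simpa using hsmall.smul_isBigO (isBigO_refl (fun h : E => h) (𝓝 0))
  · exact (hasFDerivAt_norm_rpow_of_ne_zero hy q).smul (hasFDerivAt_id y)

theorem norm_fderivNormRpowSmul_le {q : ℝ} (hq : 0 < q) (y : E) :
    ‖fderivNormRpowSmul q y‖ ≤ (1 + q) * ‖y‖ ^ q := by
  have hsq : ‖y‖ ^ (q - 2) * (‖y‖ * ‖y‖) = ‖y‖ ^ q := by
    rw [← sq, ← rpow_natCast, ← rpow_add' (norm_nonneg y) (by simpa using hq.ne')]
    norm_num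
  calc ‖fderivNormRpowSmul q y‖
      ≤ ‖y‖ ^ q * 1 + q * ‖y‖ ^ (q - 2) * ‖y‖ * ‖y‖ := by
        refine (norm_add_le _ _).trans (add_le_add ?_ ?_)
        · refine (norm_smul_le (‖y‖ ^ q) (ContinuousLinearMap.id ℝ E)).trans ?_
          rw [norm_of_nonneg (by positivity)]
          gcongr
          exact ContinuousLinearMap.norm_id_le
        · rw [ContinuousLinearMap.norm_smulRight_apply, norm_smul, innerSL_apply_norm,
            norm_of_nonneg (by positivity)]
    _ = (1 + q) * ‖y‖ ^ q := by linear_combination q * hsq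

theorem continuous_fderivNormRpowSmul {q : ℝ} (hq : 0 < q) :
    Continuous (fderivNormRpowSmul q : E → E →L[ℝ] E) := by
  refine continuous_iff_continuousAt.mpr fun y => ?_
  rcases eq_or_ne y 0 with rfl | hy
  · rw [ContinuousAt, fderivNormRpowSmul_zero hq]
    refine squeeze_zero_norm (norm_fderivNormRpowSmul_le hq) ?_
    convert ((continuous_norm.rpow_const fun _ => Or.inr hq.le).const_mul (1 + q)).tendsto
      (0 : E) using 2
    simp [hq.ne']
  · have hcoeff : ContinuousAt (fun z : E => (q * ‖z‖ ^ (q - 2)) • innerSL ℝ z) y := by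
      fun_prop (discharger := simp [hy])
    have hscal : ContinuousAt (fun z : E => ‖z‖ ^ q) y := by
      fun_prop (discharger := simp [hy])
    have hsmulRight : ContinuousAt
        (fun z : E => ((q * ‖z‖ ^ (q - 2)) • innerSL ℝ z).smulRight z) y :=
      isBoundedBilinearMap_smulRight.continuous.continuousAt.comp (hcoeff.prodMk continuousAt_id)
    exact (hscal.smul continuousAt_const).add hsmulRight

theorem contDiff_norm_rpow_smul {q : ℝ} (hq : 0 < q) :
    ContDiff ℝ 1 (fun y : E => ‖y‖ ^ q • y) :=
  contDiff_one_iff_hasFDerivAt.mpr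
    ⟨_, continuous_fderivNormRpowSmul hq, hasFDerivAt_norm_rpow_smul hq⟩

theorem contDiff_two_norm_rpow {p : ℝ} (hp : 2 < p) : ContDiff ℝ 2 (fun x : E => ‖x‖ ^ p) := by
  have hfderiv :
      fderiv ℝ (fun x : E => ‖x‖ ^ p) = fun y => p • innerSL ℝ (‖y‖ ^ (p - 2) • y) := by
    ext y v
    simp [fderiv_norm_rpow y (by linarith : 1 < p), mul_assoc]
  rw [show (2 : WithTop ℕ∞) = 1 + 1 from rfl, contDiff_succ_iff_fderiv, hfderiv]
  exact ⟨differentiable_norm_rpow (by linarith), by simp,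
    ((innerSL ℝ).contDiff.comp (contDiff_norm_rpow_smul (by linarith))).const_smul p⟩

theorem HasDerivAt.hasGradientAt_comp_norm [CompleteSpace E] {η : ℝ → ℝ} {η' : ℝ} {x : E}
    (hx : x ≠ 0) (hη : HasDerivAt η η' ‖x‖) :
    HasGradientAt (fun y : E => η ‖y‖) ((η' / ‖x‖) • x) x := by
  have hnorm := hasFDerivAt_norm_rpow_of_ne_zero hx 1
  simp only [rpow_one] at hnorm
  rw [hasGradientAt_iff_hasFDerivAt]
  refine (hη.comp_hasFDerivAt x hnorm).congr_fderiv ?_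
  ext v
  norm_num [real_inner_smul_left, rpow_neg_one, div_eq_mul_inv, mul_assoc]

theorem norm_add_smul_inv_norm_smul {x : E} (hx : x ≠ 0) {t : ℝ} (ht : -‖x‖ ≤ t) :
    ‖x + t • (‖x‖⁻¹ • x)‖ = ‖x‖ + t := by
  have hr : 0 < ‖x‖ := norm_pos_iff.mpr hx
  have hline : x + t • (‖x‖⁻¹ • x) = ((‖x‖ + t) / ‖x‖) • x := by
    rw [smul_smul, add_div, div_self hr.ne', add_smul, one_smul, div_eq_mul_inv]
  rw [hline, norm_smul, norm_of_nonneg (div_nonneg (by linarith) hr.le)]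
  field_simp

end

section

variable {E F : Type*} [NormedAddCommGroup E] [NormedSpace ℝ E]
  [NormedAddCommGroup F] [NormedSpace ℝ F]

theorem deriv_deriv_comp_add_smul {f : E → F} {x : E} (v : E)
    (hf : ∀ᶠ y in 𝓝 x, DifferentiableAt ℝ f y) (hf' : DifferentiableAt ℝ (fderiv ℝ f) x) :
    deriv (deriv fun t : ℝ => f (x + t • v)) 0 = fderiv ℝ (fderiv ℝ f) x v v := by
  have hline : ∀ t : ℝ, HasDerivAt (fun t : ℝ => x + t • v) v t := fun t => by
    simpa using ((hasDerivAt_id t).smul_const v).const_add x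
  have hline0 : Tendsto (fun t : ℝ => x + t • v) (𝓝 0) (𝓝 x) := by
    simpa using (hline 0).continuousAt.tendsto
  have hderiv : deriv (fun t : ℝ => f (x + t • v)) =ᶠ[𝓝 0] fun t => fderiv ℝ f (x + t • v) v :=
    (hline0.eventually hf).mono fun t ht => (ht.hasFDerivAt.comp_hasDerivAt t (hline t)).deriv
  rw [hderiv.deriv_eq]
  have hsecond := hf'.hasFDerivAt.comp_hasDerivAt_of_eq 0 (hline 0) (by simp)
  simpa using (hsecond.clm_apply (hasDerivAt_const 0 v)).deriv

end

theorem normInfLaplacian_comp_norm {m : ℕ} {η : ℝ → ℝ} {x : EuclideanSpace ℝ (Fin m)}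
    (hx : x ≠ 0) (hη : ContDiffAt ℝ 2 η ‖x‖) (hη' : 0 < deriv η ‖x‖) :
    normInfLaplacian (fun y => η ‖y‖) x = deriv (deriv η) ‖x‖ := by
  have hr : 0 < ‖x‖ := norm_pos_iff.mpr hx
  have hu : ContDiffAt ℝ 2 (fun y : EuclideanSpace ℝ (Fin m) => η ‖y‖) x :=
    hη.comp x (contDiffAt_norm ℝ hx)
  have hdir : ‖gradient (fun y => η ‖y‖) x‖⁻¹ • gradient (fun y => η ‖y‖) x = ‖x‖⁻¹ • x := by
    rw [((hη.differentiableAt (by norm_num)).hasDerivAt.hasGradientAt_comp_norm hx).gradient,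
      norm_smul, norm_of_nonneg (div_pos hη' hr).le, smul_smul]
    congr 1
    field_simp
  have hradial : (fun t : ℝ => η ‖x + t • (‖x‖⁻¹ • x)‖) =ᶠ[𝓝 0] fun t => η (‖x‖ + t) :=
    (eventually_ge_nhds (neg_neg_of_pos hr)).mono fun t ht => by
      dsimp only
      rw [norm_add_smul_inv_norm_smul hx ht]
  have hshift : deriv (fun t => η (‖x‖ + t)) = fun t => deriv η (‖x‖ + t) :=
    funext fun t => deriv_comp_const_add η ‖x‖ t
  rw [normInfLaplacian, hdir, iteratedFDeriv_two_apply]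
  simp only [Matrix.cons_val_zero, Matrix.cons_val_one]
  rw [← deriv_deriv_comp_add_smul _
      ((hu.eventually (by simp)).mono fun y hy => hy.differentiableAt (by norm_num))
      ((hu.fderiv_right (m := 1) le_rfl).differentiableAt one_ne_zero),
    hradial.deriv.deriv_eq, hshift, deriv_comp_const_add, add_zero]

theorem deriv_const_mul_rpow (c p : ℝ) :
    deriv (fun t : ℝ => c * t ^ p) = fun t => c * p * t ^ (p - 1) := by
  ext t
  simp only [deriv_const_mul_field', Real.deriv_rpow_const]
  ring

theorem deriv_deriv_const_mul_rpow (c p t : ℝ) :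
    deriv (deriv fun t : ℝ => c * t ^ p) t = c * (p * (p - 1)) * t ^ (p - 2) := by
  rw [deriv_const_mul_rpow, deriv_const_mul_rpow]
  ring_nf

theorem sharp_profile_ode {θ lam t : ℝ} (hθ : -1 < θ) (hθ1 : θ < 1) (hlam : 0 ≤ lam)
    (ht : 0 ≤ t) :
    (lam * (1 - θ) ^ 2 / (2 * (1 + θ))) ^ (1 / (1 - θ)) *
        (2 / (1 - θ) * (2 / (1 - θ) - 1)) * t ^ (2 / (1 - θ) - 2) =
      lam * ((lam * (1 - θ) ^ 2 / (2 * (1 + θ))) ^ (1 / (1 - θ)) * t ^ (2 / (1 - θ))) ^ θ := by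
  have h1 : 1 - θ ≠ 0 := by linarith
  have h2 : 1 + θ ≠ 0 := by linarith
  set K := lam * (1 - θ) ^ 2 / (2 * (1 + θ)) with hK_def
  have hK : 0 ≤ K := div_nonneg (by positivity) (by linarith)
  have hKp : K * (2 / (1 - θ) * (2 / (1 - θ) - 1)) = lam := by
    rw [hK_def]
    field_simp
    ring
  have hpow : K ^ (1 / (1 - θ)) = K * (K ^ (1 / (1 - θ))) ^ θ := by
    rw [← rpow_mul hK, ← rpow_one_add' hK (by field_simp; simpa using h1)]
    congr 1
    field_simp
    ring
  have hexp : 2 / (1 - θ) * θ = 2 / (1 - θ) - 2 := by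
    field_simp
    ring
  rw [mul_rpow (by positivity) (by positivity), ← rpow_mul ht, hexp, ← hKp]
  nth_rw 1 [hpow]
  ring

/-- Sharpness of the constant in item 5) of the main theorem: with
`τ = (λ(1−θ)²/(2(1+θ)))^{1/(1−θ)}`, the function `u x = τ * ‖x‖^{2/(1−θ)}`
is C² and satisfies `Δ∞ᴺ u = λ uᶿ` away from the origin. -/
theorem normInfLaplacian_sharp_radial {m : ℕ} (θ lam : ℝ)
    (hθ0 : 0 < θ) (hθ1 : θ < 1) (hlam : 0 < lam) :
    ContDiff ℝ 2 (fun x : EuclideanSpace ℝ (Fin m) =>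
      (lam * (1 - θ) ^ 2 / (2 * (1 + θ))) ^ (1 / (1 - θ)) * ‖x‖ ^ (2 / (1 - θ))) ∧
    ∀ x : EuclideanSpace ℝ (Fin m), x ≠ 0 →
      normInfLaplacian (fun x : EuclideanSpace ℝ (Fin m) =>
          (lam * (1 - θ) ^ 2 / (2 * (1 + θ))) ^ (1 / (1 - θ)) *
            ‖x‖ ^ (2 / (1 - θ))) x =
        lam * ((lam * (1 - θ) ^ 2 / (2 * (1 + θ))) ^ (1 / (1 - θ)) *
          ‖x‖ ^ (2 / (1 - θ))) ^ θ := by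
  have hp : 2 < 2 / (1 - θ) := by
    rw [lt_div_iff₀ (by linarith)]
    linarith
  refine ⟨contDiff_const.mul (contDiff_two_norm_rpow hp), fun x hx => ?_⟩
  have hr : 0 < ‖x‖ := norm_pos_iff.mpr hx
  set p := 2 / (1 - θ)
  set τ := (lam * (1 - θ) ^ 2 / (2 * (1 + θ))) ^ (1 / (1 - θ))
  have hτ : 0 < τ := rpow_pos_of_pos (div_pos (by positivity) (by linarith)) _
  have hη' : 0 < deriv (fun t => τ * t ^ p) ‖x‖ := by
    rw [deriv_const_mul_rpow]
    exact mul_pos (mul_pos hτ (by linarith)) (rpow_pos_of_pos hr _)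
  calc normInfLaplacian (fun y => τ * ‖y‖ ^ p) x
      = deriv (deriv fun t => τ * t ^ p) ‖x‖ :=
        normInfLaplacian_comp_norm (η := fun t => τ * t ^ p) hx
          (contDiffAt_const.mul (contDiffAt_rpow_const_of_ne hr.ne')) hη'
    _ = τ * (p * (p - 1)) * ‖x‖ ^ (p - 2) := deriv_deriv_const_mul_rpow τ p ‖x‖
    _ = lam * (τ * ‖x‖ ^ p) ^ θ := sharp_profile_ode (by linarith) hθ1 hlam.le (norm_nonneg x)
end

section
/- Let g : ℝ → ℝ be continuous, nonnegative, and nondecreasing, with b > 0, u₀ ∈ ℝ, and let η_b denote the solution of η''=g(η), η(0)=u₀, η'(0)=b. Then for each fixed t in the common domain, the map b ↦ η_b(t) is nondecreasing in b. -/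
/-!
With `G x = ∫_{u₀}^x g`, the energy `η'² - 2 G(η)` is conserved, and `η' ≥ b > 0` keeps `η ≥ u₀`,
so `η' = √(b² + 2 G(η))`. Hence, for `ψ_b = 1 / √(b² + 2 G)`, the chain rule gives
`d/dt ∫_{u₀}^{η t} ψ_b = ψ_b(η) η' = 1`, i.e. `t = ∫_{u₀}^{η_b t} ψ_b`. As `ψ_{b₂} ≤ ψ_{b₁}`,
`∫_{u₀}^{η_{b₁} t} ψ_{b₁} = t = ∫_{u₀}^{η_{b₂} t} ψ_{b₂} ≤ ∫_{u₀}^{η_{b₂} t} ψ_{b₁}`,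
and `x ↦ ∫_{u₀}^x ψ_{b₁}` is strictly increasing.
-/

open Set

lemma eq_of_hasDerivAt_zero_Ico {a c : ℝ} {f : ℝ → ℝ}
    (hf : ∀ s ∈ Ico a c, HasDerivAt f 0 s) : ∀ t ∈ Ico a c, f t = f a := fun t ht =>
  constant_of_has_deriv_right_zero
    (fun s hs => (hf s ⟨hs.1, hs.2.trans_lt ht.2⟩).continuousAt.continuousWithinAt)
    (fun s hs => (hf s ⟨hs.1, hs.2.trans ht.2⟩).hasDerivWithinAt) t ⟨ht.1, le_rfl⟩

lemma monotoneOn_Ico_of_hasDerivAt_nonneg {a c : ℝ} {f f' : ℝ → ℝ}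
    (hf : ∀ s ∈ Ico a c, HasDerivAt f (f' s) s) (hf' : ∀ s ∈ Ico a c, 0 ≤ f' s) :
    MonotoneOn f (Ico a c) := by
  refine monotoneOn_of_hasDerivWithinAt_nonneg (f' := f') (convex_Ico a c)
    (fun s hs => (hf s hs).continuousAt.continuousWithinAt) (fun s hs => ?_) (fun s hs => ?_)
  all_goals rw [interior_Ico] at hs
  exacts [(hf s (Ioo_subset_Ico_self hs)).hasDerivWithinAt, hf' s (Ioo_subset_Ico_self hs)]

/-- The function `ψ_b`, i.e. `1 / η'` as a function of the position. The `max` only acts on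
`x < u₀`, where it keeps `ψ_b` positive and continuous. -/
noncomputable def inverseSpeed (g : ℝ → ℝ) (u₀ b x : ℝ) : ℝ :=
  (√(b ^ 2 + 2 * max (∫ r in u₀..x, g r) 0))⁻¹

section inverseSpeed

variable {g : ℝ → ℝ} {u₀ b : ℝ}

lemma sqrt_inverseSpeed_radicand_pos (hb : 0 < b) (x : ℝ) :
    0 < √(b ^ 2 + 2 * max (∫ r in u₀..x, g r) 0) :=
  Real.sqrt_pos.2 (by positivity)

lemma inverseSpeed_pos (hb : 0 < b) (x : ℝ) : 0 < inverseSpeed g u₀ b x :=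
  inv_pos.2 (sqrt_inverseSpeed_radicand_pos hb x)

lemma continuous_inverseSpeed (hg : Continuous g) (hb : 0 < b) :
    Continuous (inverseSpeed g u₀ b) := by
  have hG := intervalIntegral.continuous_primitive (μ := MeasureTheory.volume)
    (fun _ _ => hg.intervalIntegrable _ _) u₀
  exact Continuous.inv₀ (by fun_prop) fun x => (sqrt_inverseSpeed_radicand_pos hb x).ne'

lemma inverseSpeed_anti {b₁ b₂ : ℝ} (hb₁ : 0 < b₁) (hb : b₁ ≤ b₂) (x : ℝ) :
    inverseSpeed g u₀ b₂ x ≤ inverseSpeed g u₀ b₁ x := by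
  refine inv_anti₀ (sqrt_inverseSpeed_radicand_pos hb₁ x) (Real.sqrt_le_sqrt ?_)
  nlinarith

lemma strictMono_integral_inverseSpeed (hg : Continuous g) (hb : 0 < b) :
    StrictMono fun x => ∫ s in u₀..x, inverseSpeed g u₀ b s :=
  strictMono_of_hasDerivAt_pos
    (fun x => ((continuous_inverseSpeed hg hb).integral_hasStrictDerivAt u₀ x).hasDerivAt)
    (inverseSpeed_pos hb)

end inverseSpeed

section solution

variable {g : ℝ → ℝ} {u₀ b T : ℝ} {η η' : ℝ → ℝ}

lemma le_deriv_of_solution (hg0 : ∀ s, 0 ≤ g s) (hη'0 : η' 0 = b)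
    (hd2 : ∀ t ∈ Ico 0 T, HasDerivAt η' (g (η t)) t) : ∀ t ∈ Ico 0 T, b ≤ η' t := fun _ ht =>
  hη'0 ▸ monotoneOn_Ico_of_hasDerivAt_nonneg hd2 (fun s _ => hg0 (η s))
    ⟨le_rfl, ht.1.trans_lt ht.2⟩ ht ht.1

lemma le_of_solution (hg0 : ∀ s, 0 ≤ g s) (hb : 0 ≤ b) (hη0 : η 0 = u₀) (hη'0 : η' 0 = b)
    (hd1 : ∀ t ∈ Ico 0 T, HasDerivAt η (η' t) t)
    (hd2 : ∀ t ∈ Ico 0 T, HasDerivAt η' (g (η t)) t) : ∀ t ∈ Ico 0 T, u₀ ≤ η t := fun _ ht =>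
  hη0 ▸ monotoneOn_Ico_of_hasDerivAt_nonneg hd1
    (fun s hs => hb.trans (le_deriv_of_solution hg0 hη'0 hd2 s hs))
    ⟨le_rfl, ht.1.trans_lt ht.2⟩ ht ht.1

lemma deriv_sq_of_solution (hg : Continuous g) (hη0 : η 0 = u₀) (hη'0 : η' 0 = b)
    (hd1 : ∀ t ∈ Ico 0 T, HasDerivAt η (η' t) t)
    (hd2 : ∀ t ∈ Ico 0 T, HasDerivAt η' (g (η t)) t) :
    ∀ t ∈ Ico 0 T, η' t ^ 2 = b ^ 2 + 2 * ∫ r in u₀..η t, g r := by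
  have henergy : ∀ s ∈ Ico 0 T,
      HasDerivAt (fun u => η' u ^ 2 - 2 * ∫ r in u₀..η u, g r) 0 s := by
    intro s hs
    have hsq : HasDerivAt (fun u => η' u ^ 2) (2 * η' s * g (η s)) s :=
      ((hd2 s hs).pow 2).congr_deriv (by norm_num)
    have hG : HasDerivAt (fun u => ∫ r in u₀..η u, g r) (g (η s) * η' s) s :=
      (hg.integral_hasStrictDerivAt u₀ (η s)).hasDerivAt.comp s (hd1 s hs)
    exact (hsq.sub (hG.const_mul 2)).congr_deriv (by ring)
  intro t ht
  have := eq_of_hasDerivAt_zero_Ico henergy t ht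
  simp only [hη0, hη'0, intervalIntegral.integral_same] at this
  linarith

lemma integral_inverseSpeed_of_solution (hg : Continuous g) (hg0 : ∀ s, 0 ≤ g s) (hb : 0 < b)
    (hη0 : η 0 = u₀) (hη'0 : η' 0 = b)
    (hd1 : ∀ t ∈ Ico 0 T, HasDerivAt η (η' t) t)
    (hd2 : ∀ t ∈ Ico 0 T, HasDerivAt η' (g (η t)) t) :
    ∀ t ∈ Ico 0 T, ∫ s in u₀..η t, inverseSpeed g u₀ b s = t := by
  have hspeed : ∀ t ∈ Ico 0 T, inverseSpeed g u₀ b (η t) * η' t = 1 := by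
    intro t ht
    have hη' : 0 < η' t := hb.trans_le (le_deriv_of_solution hg0 hη'0 hd2 t ht)
    have hG : 0 ≤ ∫ r in u₀..η t, g r :=
      intervalIntegral.integral_nonneg (le_of_solution hg0 hb.le hη0 hη'0 hd1 hd2 t ht)
        fun s _ => hg0 s
    rw [inverseSpeed, max_eq_left hG, ← deriv_sq_of_solution hg hη0 hη'0 hd1 hd2 t ht,
      Real.sqrt_sq hη'.le, inv_mul_cancel₀ hη'.ne']
  have htime : ∀ s ∈ Ico 0 T,
      HasDerivAt (fun u => (∫ r in u₀..η u, inverseSpeed g u₀ b r) - u) 0 s := by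
    intro s hs
    have h := ((continuous_inverseSpeed (u₀ := u₀) hg hb).integral_hasStrictDerivAt u₀
      (η s)).hasDerivAt.comp s (hd1 s hs)
    exact (h.sub (hasDerivAt_id s)).congr_deriv (by rw [hspeed s hs, sub_self])
  intro t ht
  have := eq_of_hasDerivAt_zero_Ico htime t ht
  simp only [hη0, intervalIntegral.integral_same, sub_zero] at this
  linarith

end solution

theorem g_cone_monotone_in_slope_general (g : ℝ → ℝ)
    (hg : Continuous g) (hg0 : ∀ s, 0 ≤ g s)
    (u₀ b₁ b₂ T : ℝ) (hb₁ : 0 < b₁) (hb : b₁ ≤ b₂)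
    (η₁ η₁' η₂ η₂' : ℝ → ℝ)
    (hη₁0 : η₁ 0 = u₀) (hη₁'0 : η₁' 0 = b₁)
    (hη₂0 : η₂ 0 = u₀) (hη₂'0 : η₂' 0 = b₂)
    (hd11 : ∀ t ∈ Set.Ico (0 : ℝ) T, HasDerivAt η₁ (η₁' t) t)
    (hd12 : ∀ t ∈ Set.Ico (0 : ℝ) T, HasDerivAt η₁' (g (η₁ t)) t)
    (hd21 : ∀ t ∈ Set.Ico (0 : ℝ) T, HasDerivAt η₂ (η₂' t) t)
    (hd22 : ∀ t ∈ Set.Ico (0 : ℝ) T, HasDerivAt η₂' (g (η₂ t)) t) :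
    ∀ t ∈ Set.Ico (0 : ℝ) T, η₁ t ≤ η₂ t := by
  intro t ht
  have hb₂ : 0 < b₂ := hb₁.trans_le hb
  have htime₁ := integral_inverseSpeed_of_solution hg hg0 hb₁ hη₁0 hη₁'0 hd11 hd12 t ht
  have htime₂ := integral_inverseSpeed_of_solution hg hg0 hb₂ hη₂0 hη₂'0 hd21 hd22 t ht
  have hslower :
      ∫ s in u₀..η₂ t, inverseSpeed g u₀ b₂ s ≤ ∫ s in u₀..η₂ t, inverseSpeed g u₀ b₁ s :=
    intervalIntegral.integral_mono_on (le_of_solution hg0 hb₂.le hη₂0 hη₂'0 hd21 hd22 t ht)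
      ((continuous_inverseSpeed hg hb₂).intervalIntegrable _ _)
      ((continuous_inverseSpeed hg hb₁).intervalIntegrable _ _)
      fun x _ => inverseSpeed_anti hb₁ hb x
  refine (strictMono_integral_inverseSpeed (u₀ := u₀) hg hb₁).le_iff_le.1 ?_
  calc ∫ s in u₀..η₁ t, inverseSpeed g u₀ b₁ s
      = ∫ s in u₀..η₂ t, inverseSpeed g u₀ b₂ s := htime₁.trans htime₂.symm
    _ ≤ ∫ s in u₀..η₂ t, inverseSpeed g u₀ b₁ s := hslower

/-- Monotone dependence of the g-cone profile on the initial slope: if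
`g` is continuous, nonnegative and nondecreasing, and `η₁, η₂` solve
`η'' = g(η)`, `η(0) = u₀` with initial slopes `0 < b₁ ≤ b₂`, then
`η₁ t ≤ η₂ t` for every `t` in the common domain `[0, T)`. -/
theorem g_cone_monotone_in_slope (g : ℝ → ℝ)
    (hg : Continuous g) (hg0 : ∀ s, 0 ≤ g s) (hgmono : Monotone g)
    (u₀ b₁ b₂ T : ℝ) (hb₁ : 0 < b₁) (hb : b₁ ≤ b₂) (hT : 0 < T)
    (η₁ η₁' η₂ η₂' : ℝ → ℝ)
    (hη₁0 : η₁ 0 = u₀) (hη₁'0 : η₁' 0 = b₁)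
    (hη₂0 : η₂ 0 = u₀) (hη₂'0 : η₂' 0 = b₂)
    (hd11 : ∀ t ∈ Set.Ico (0 : ℝ) T, HasDerivAt η₁ (η₁' t) t)
    (hd12 : ∀ t ∈ Set.Ico (0 : ℝ) T, HasDerivAt η₁' (g (η₁ t)) t)
    (hd21 : ∀ t ∈ Set.Ico (0 : ℝ) T, HasDerivAt η₂ (η₂' t) t)
    (hd22 : ∀ t ∈ Set.Ico (0 : ℝ) T, HasDerivAt η₂' (g (η₂ t)) t) :
    ∀ t ∈ Set.Ico (0 : ℝ) T, η₁ t ≤ η₂ t :=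
  g_cone_monotone_in_slope_general g hg hg0 u₀ b₁ b₂ T hb₁ hb η₁ η₁' η₂ η₂' hη₁0 hη₁'0 hη₂0 hη₂'0
    hd11 hd12 hd21 hd22
end
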